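/- arXiv:2409.03129 — 4 statements merged into one kernel-verified Lean document; each statement's English description precedes it below -/
import Mathlib

section
/- In the two-agent series component maintenance game with repair costs C1 = (1−p1)·p2 and C2 = (1−p2)·p1, both the joint action (DN,DN) and (RE,RE) are pure Nash equilibria, and the Price of Anarchy is at least 2/(p1+p2). -/
/-- Effective working probability of a component with prior probability `p`:
`1` if repaired, `p` otherwise. -/
noncomputable def q (p : ℝ) (s : Bool) : ℝ := if s then 1 else p

/-- Agent 1's expected cost in the two-agent series game. -/
noncomputable def cost1 (C1 p1 p2 : ℝ) (s1 s2 : Bool) : ℝ :=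
  C1 * (if s1 then 1 else 0) + 1 - q p1 s1 * q p2 s2

/-- Agent 2's expected cost in the two-agent series game. -/
noncomputable def cost2 (C2 p1 p2 : ℝ) (s1 s2 : Bool) : ℝ :=
  C2 * (if s2 then 1 else 0) + 1 - q p1 s1 * q p2 s2

/-- Social cost of the two-agent series game. -/
noncomputable def social (C1 C2 p1 p2 : ℝ) (s1 s2 : Bool) : ℝ :=
  cost1 C1 p1 p2 s1 s2 + cost2 C2 p1 p2 s1 s2

/-- Pure Nash equilibrium of the two-agent series game. -/
def isNE (C1 C2 p1 p2 : ℝ) (s1 s2 : Bool) : Prop :=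
  (∀ a : Bool, cost1 C1 p1 p2 s1 s2 ≤ cost1 C1 p1 p2 a s2) ∧
  (∀ a : Bool, cost2 C2 p1 p2 s1 s2 ≤ cost2 C2 p1 p2 s1 a)

/-- With `C1 = (1-p1)p2` and `C2 = (1-p2)p1`, both (DN,DN) and (RE,RE) are pure
Nash equilibria, and the Price of Anarchy `M/m` is at least `2/(p1+p2)`. -/
theorem stmt_2 (p1 p2 : ℝ) (hp1 : 0 < p1) (hp1' : p1 < 1) (hp2 : 0 < p2) (hp2' : p2 < 1)
    (C1 C2 : ℝ) (hC1 : C1 = (1 - p1) * p2) (hC2 : C2 = (1 - p2) * p1)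
    (M m : ℝ)
    (hM : IsGreatest {c | ∃ s1 s2 : Bool,
      isNE C1 C2 p1 p2 s1 s2 ∧ social C1 C2 p1 p2 s1 s2 = c} M)
    (hm : IsLeast {c | ∃ s1 s2 : Bool, social C1 C2 p1 p2 s1 s2 = c} m) :
    isNE C1 C2 p1 p2 false false ∧ isNE C1 C2 p1 p2 true true ∧
      2 / (p1 + p2) ≤ M / m := by
  subst hC1 hC2
  have hNE1 : isNE ((1 - p1) * p2) ((1 - p2) * p1) p1 p2 false false := by
    constructor <;> intro a <;> cases a <;>
      simp [isNE, cost1, cost2, q] <;> nlinarith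
  have hNE2 : isNE ((1 - p1) * p2) ((1 - p2) * p1) p1 p2 true true := by
    constructor <;> intro a <;> cases a <;>
      simp [isNE, cost1, cost2, q] <;> nlinarith
  refine ⟨hNE1, hNE2, ?_⟩
  have hMge : social ((1 - p1) * p2) ((1 - p2) * p1) p1 p2 false false ≤ M :=
    hM.2 ⟨false, false, hNE1, rfl⟩
  have hmle : m ≤ social ((1 - p1) * p2) ((1 - p2) * p1) p1 p2 true true :=
    hm.2 ⟨true, true, rfl⟩
  simp [social, cost1, cost2, q] at hMge hmle
  have hmpos : 0 < m := by
    obtain ⟨s1, s2, hs⟩ := hm.1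
    cases s1 <;> cases s2 <;> simp [social, cost1, cost2, q] at hs <;> nlinarith
  have hsum : 0 < p1 + p2 := by linarith
  rw [div_le_div_iff₀ hsum hmpos]
  nlinarith [mul_pos hp1 hp2, sq_nonneg (p1 - p2), sq_nonneg (p1 + p2 - 2)]
end

section
/- In the n-agent series component maintenance game with repair costs C_i = (1−p_i)·∏_{j≠i} p_j, the all-do-nothing profile 0^n and the all-repair profile 1^n are both pure Nash equilibria, and the Price of Anarchy is at least H̃/G̃^n, where H̃ is the harmonic mean and G̃ is the geometric mean of p_1,…,p_n. -/
/-!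
At `0ⁿ` a deviating agent `i` pays `Cᵢ` but raises the system probability from `P = ∏ pⱼ` to
`Qᵢ = P / pᵢ`, and `Cᵢ = Qᵢ - P` makes it exactly indifferent; at `1ⁿ` a deviation saves
`Cᵢ = (1 - pᵢ) Qᵢ ≤ 1 - pᵢ`, the loss it causes. Hence the worst equilibrium costs at least
`n (1 - P)`, while the optimum costs at most `∑ Cᵢ = T - n P ≤ (1 - P) T` with `T = ∑ Qᵢ ≤ n`.
The ratio is at least `n / T = n / (P ∑ 1/pᵢ) = H̃ / G̃ⁿ`.
-/

open Finset

/-- Probability the series system works under action profile `s`. -/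
noncomputable def sysP {n : ℕ} (p : Fin n → ℝ) (s : Fin n → Bool) : ℝ :=
  ∏ i, (if s i then 1 else p i)

/-- Repair cost `C_i = (1 - p_i) ∏_{j ≠ i} p_j`. -/
noncomputable def Cser {n : ℕ} (p : Fin n → ℝ) (i : Fin n) : ℝ :=
  (1 - p i) * ∏ j ∈ Finset.univ.erase i, p j

/-- Agent `i`'s expected cost in the `n`-agent series game. -/
noncomputable def costSer {n : ℕ} (p : Fin n → ℝ) (i : Fin n) (s : Fin n → Bool) : ℝ :=
  Cser p i * (if s i then 1 else 0) + 1 - sysP p s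

/-- Social cost. -/
noncomputable def socialSer {n : ℕ} (p : Fin n → ℝ) (s : Fin n → Bool) : ℝ :=
  ∑ i, costSer p i s

/-- Pure Nash equilibrium (each agent has two actions, so it suffices to
compare with flipping one's own action). -/
def isNESer {n : ℕ} (p : Fin n → ℝ) (s : Fin n → Bool) : Prop :=
  ∀ i, costSer p i s ≤ costSer p i (Function.update s i (!(s i)))

section SeriesGame

variable {n : ℕ} (p : Fin n → ℝ)

lemma sysP_eq_mul_prod_erase (s : Fin n → Bool) (i : Fin n) :
    sysP p s = (if s i then 1 else p i) * ∏ j ∈ univ.erase i, (if s j then 1 else p j) :=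
  (mul_prod_erase _ _ (mem_univ i)).symm

lemma sysP_le_factor (h0 : ∀ i, 0 ≤ p i) (h1 : ∀ i, p i ≤ 1) (s : Fin n → Bool) (i : Fin n) :
    sysP p s ≤ if s i then 1 else p i := by
  have hfactor : ∀ j, 0 ≤ (if s j then 1 else p j) ∧ (if s j then 1 else p j) ≤ 1 := fun j => by
    split <;> simp [h0 j, h1 j]
  rw [sysP_eq_mul_prod_erase]
  exact mul_le_of_le_one_right (hfactor i).1
    (prod_le_one (fun j _ => (hfactor j).1) fun j _ => (hfactor j).2)

lemma sysP_const_false : sysP p (fun _ => false) = ∏ i, p i := by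
  simp [sysP]

lemma sysP_const_true : sysP p (fun _ => true) = 1 := by
  simp [sysP]

lemma sysP_update_const_false (i : Fin n) :
    sysP p (Function.update (fun _ => false) i true) = ∏ j ∈ univ.erase i, p j := by
  rw [sysP_eq_mul_prod_erase p _ i, Function.update_self, if_pos rfl, one_mul]
  refine prod_congr rfl fun j hj => ?_
  simp [Function.update_of_ne (ne_of_mem_erase hj)]

lemma sysP_update_const_true (i : Fin n) :
    sysP p (Function.update (fun _ => true) i false) = p i := by
  rw [sysP_eq_mul_prod_erase p _ i, Function.update_self, if_neg Bool.false_ne_true,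
    prod_eq_one fun j hj => by simp [Function.update_of_ne (ne_of_mem_erase hj)], mul_one]

lemma Cser_eq_sub (i : Fin n) : Cser p i = ∏ j ∈ univ.erase i, p j - ∏ j, p j := by
  rw [Cser, ← mul_prod_erase univ p (mem_univ i)]
  ring

lemma Cser_pos (h0 : ∀ i, 0 < p i) (h1 : ∀ i, p i < 1) (i : Fin n) : 0 < Cser p i :=
  mul_pos (sub_pos.mpr (h1 i)) (prod_pos fun j _ => h0 j)

lemma isNESer_const_false : isNESer p (fun _ => false) := by
  intro i
  simp only [costSer, Bool.not_false, Function.update_self, if_true, Bool.false_eq_true, if_false,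
    sysP_const_false, sysP_update_const_false, Cser_eq_sub]
  linarith

lemma isNESer_const_true (h0 : ∀ i, 0 ≤ p i) (h1 : ∀ i, p i ≤ 1) :
    isNESer p (fun _ => true) := by
  intro i
  have hQ : ∏ j ∈ univ.erase i, p j ≤ 1 := prod_le_one (fun j _ => h0 j) fun j _ => h1 j
  simp only [costSer, Cser, Bool.not_true, Function.update_self, if_true, Bool.false_eq_true,
    if_false, sysP_const_true, sysP_update_const_true]
  nlinarith [h1 i]

lemma costSer_pos (h0 : ∀ i, 0 < p i) (h1 : ∀ i, p i < 1) (i : Fin n) (s : Fin n → Bool) :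
    0 < costSer p i s := by
  have hsys := sysP_le_factor p (fun j => (h0 j).le) (fun j => (h1 j).le) s i
  unfold costSer
  cases hs : s i <;> simp only [hs, if_true, Bool.false_eq_true, if_false] at hsys ⊢
  · linarith [h1 i]
  · linarith [Cser_pos p h0 h1 i]

lemma socialSer_const_false : socialSer p (fun _ => false) = n * (1 - ∏ i, p i) := by
  simp [socialSer, costSer, sysP_const_false, mul_sub]

lemma socialSer_const_true :
    socialSer p (fun _ => true) = ∑ i, ∏ j ∈ univ.erase i, p j - n * ∏ i, p i := by
  simp [socialSer, costSer, sysP_const_true, Cser_eq_sub, sum_sub_distrib]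

lemma socialSer_const_true_le (h0 : ∀ i, 0 ≤ p i) (h1 : ∀ i, p i ≤ 1) :
    socialSer p (fun _ => true) ≤ (1 - ∏ i, p i) * ∑ i, ∏ j ∈ univ.erase i, p j := by
  have hT : ∑ i, ∏ j ∈ univ.erase i, p j ≤ n := by
    calc ∑ i, ∏ j ∈ univ.erase i, p j ≤ ∑ _i : Fin n, (1 : ℝ) :=
          sum_le_sum fun i _ => prod_le_one (fun j _ => h0 j) fun j _ => h1 j
      _ = n := by simp
  have hP : 0 ≤ ∏ i, p i := prod_nonneg fun i _ => h0 i
  rw [socialSer_const_true]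
  nlinarith

lemma sum_inv_mul_prod (h : ∀ i, p i ≠ 0) :
    (∑ i, (p i)⁻¹) * ∏ i, p i = ∑ i, ∏ j ∈ univ.erase i, p j := by
  rw [sum_mul]
  refine sum_congr rfl fun i _ => ?_
  rw [← mul_prod_erase univ p (mem_univ i), inv_mul_cancel_left₀ (h i)]

end SeriesGame

/-- In the `n`-agent series game with `C_i = (1-p_i)∏_{j≠i} p_j`, the all-DN and
all-RE profiles are both pure Nash equilibria, and the Price of Anarchy `M/m` is
at least `H̃ / G̃^n`, where `H̃` is the harmonic mean and `G̃` the geometric mean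
of the `p_i`. -/
theorem stmt_3 (n : ℕ) (hn : 1 ≤ n) (p : Fin n → ℝ)
    (hp : ∀ i, 0 < p i) (hp' : ∀ i, p i < 1)
    (M m : ℝ)
    (hM : IsGreatest {c | ∃ s : Fin n → Bool, isNESer p s ∧ socialSer p s = c} M)
    (hm : IsLeast {c | ∃ s : Fin n → Bool, socialSer p s = c} m) :
    isNESer p (fun _ => false) ∧ isNESer p (fun _ => true) ∧
      ((n : ℝ) / ∑ i, (p i)⁻¹) / ((∏ i, p i) ^ ((n : ℝ)⁻¹)) ^ n ≤ M / m := by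
  refine ⟨isNESer_const_false p,
    isNESer_const_true p (fun i => (hp i).le) (fun i => (hp' i).le), ?_⟩
  set P := ∏ i, p i
  set T := ∑ i, ∏ j ∈ univ.erase i, p j
  have hM_ge : n * (1 - P) ≤ M := socialSer_const_false p ▸ hM.2 ⟨_, isNESer_const_false p, rfl⟩
  have hm_le : m ≤ (1 - P) * T :=
    (hm.2 ⟨_, rfl⟩).trans (socialSer_const_true_le p (fun i => (hp i).le) (fun i => (hp' i).le))
  have hm_pos : 0 < m := by
    obtain ⟨s, rfl⟩ := hm.1
    exact sum_pos (fun i _ => costSer_pos p hp hp' i s) ⟨⟨0, hn⟩, mem_univ _⟩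
  have hT_pos : 0 < T := sum_pos (fun i _ => prod_pos fun j _ => hp j) ⟨⟨0, hn⟩, mem_univ _⟩
  rw [Real.rpow_inv_natCast_pow (prod_nonneg fun i _ => (hp i).le) (by omega), div_div,
    sum_inv_mul_prod p fun i => (hp i).ne', div_le_div_iff₀ hT_pos hm_pos]
  calc n * m ≤ n * ((1 - P) * T) := by gcongr
    _ = n * (1 - P) * T := by ring
    _ ≤ M * T := by gcongr
end

section
/- In the two-agent series component maintenance game, if (1−p1)·p2 ≤ C1 ≤ 1−p1 and (1−p2)·p1 ≤ C2 ≤ 1−p2, then both (DN,DN) and (RE,RE) are pure Nash equilibria, and the social cost of (RE,RE), namely C1+C2, is at most the social cost of (DN,DN), namely 2(1−p1·p2). -/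
/-- If `(1-p1)p2 ≤ C1 ≤ 1-p1` and `(1-p2)p1 ≤ C2 ≤ 1-p2`, then both (DN,DN) and
(RE,RE) are pure Nash equilibria, and the social cost of (RE,RE), namely
`C1 + C2`, is at most that of (DN,DN), namely `2(1 - p1 p2)`. -/
theorem stmt_4 (p1 p2 C1 C2 : ℝ)
    (hp1 : 0 < p1) (hp1' : p1 < 1) (hp2 : 0 < p2) (hp2' : p2 < 1)
    (hC1pos : 0 < C1) (hC2pos : 0 < C2)
    (hC1lo : (1 - p1) * p2 ≤ C1) (hC1hi : C1 ≤ 1 - p1)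
    (hC2lo : (1 - p2) * p1 ≤ C2) (hC2hi : C2 ≤ 1 - p2) :
    isNE C1 C2 p1 p2 false false ∧ isNE C1 C2 p1 p2 true true ∧
      C1 + C2 ≤ 2 * (1 - p1 * p2) := by
  refine ⟨⟨fun a => ?_, fun a => ?_⟩, ⟨fun a => ?_, fun a => ?_⟩, ?_⟩ <;>
    first
    | (cases a <;> simp [cost1, cost2, q] <;> nlinarith)
    | nlinarith
end

section
/- In the component maintenance game on a graph G (as defined via vertex covers), the minimum social cost over all joint actions equals the size of a minimum vertex cover of G (when G has at least one edge). -/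
open scoped Classical
open Finset

/-- The repaired set covers every edge: the system works. -/
def covers {V : Type*} (G : SimpleGraph V) (s : V → Bool) : Prop :=
  ∀ u v, G.Adj u v → (s u = true ∨ s v = true)

/-- Social cost: number of repairing agents plus `|V|` if the system is broken. -/
noncomputable def socialCost {V : Type*} [Fintype V] (G : SimpleGraph V)
    (s : V → Bool) : ℝ :=
  (∑ i : V, if s i then (1 : ℝ) else 0) +
    (Fintype.card V : ℝ) * (if covers G s then 0 else 1)

lemma sum_ind {V : Type*} [Fintype V] (s : V → Bool) :
    (∑ i : V, if s i then (1 : ℝ) else 0)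
      = ((Finset.univ.filter (fun i => s i = true)).card : ℝ) := by
  rw [Finset.sum_boole]

/-- In the component maintenance game on a graph `G` with at least one edge and
minimum vertex cover size `kstar < |V|`, the minimum social cost over all joint
actions equals `kstar`. -/
theorem stmt_8 {V : Type*} [Fintype V] [DecidableEq V] (G : SimpleGraph V)
    (hedge : ∃ u v, G.Adj u v)
    (kstar : ℕ)
    (hk : IsLeast {k | ∃ K : Finset V,
      (∀ u v, G.Adj u v → (u ∈ K ∨ v ∈ K)) ∧ K.card = k} kstar)
    (hlt : kstar < Fintype.card V) :
    IsLeast {c : ℝ | ∃ s : V → Bool, socialCost G s = c} (kstar : ℝ) := by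
  obtain ⟨⟨K, hKcov, hKcard⟩, hmin⟩ := hk
  constructor
  · refine ⟨fun i => decide (i ∈ K), ?_⟩
    have hcov : covers G (fun i => decide (i ∈ K)) := by
      intro u v huv
      rcases hKcov u v huv with h | h
      · exact Or.inl (by simp [h])
      · exact Or.inr (by simp [h])
    rw [socialCost, if_pos hcov, mul_zero, add_zero, sum_ind]
    congr 1
    rw [← hKcard]
    congr 1
    ext i; simp
  · rintro c ⟨s, rfl⟩
    by_cases hcov : covers G s
    · rw [socialCost, if_pos hcov, mul_zero, add_zero, sum_ind]
      have : kstar ≤ (Finset.univ.filter (fun i => s i = true)).card := by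
        apply hmin
        exact ⟨_, fun u v huv => by simpa using hcov u v huv, rfl⟩
      exact_mod_cast this
    · rw [socialCost, if_neg hcov, mul_one, sum_ind]
      have h1 : (0:ℝ) ≤ ((Finset.univ.filter (fun i => s i = true)).card : ℝ) := by
        positivity
      have h2 : (kstar : ℝ) ≤ (Fintype.card V : ℝ) := by exact_mod_cast hlt.le
      linarith
end
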